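/- arXiv:1904.00130 — 2 statements merged into one kernel-verified Lean document; each statement's English description precedes it below -/
import Mathlib

section
/- For every reduced word i ∈ Σ_{n+1} of the longest element of S_{n+1}, there exist words u, v over [n] such that i is 2-move equivalent to the concatenation u (n, n−1, …, 2, 1) v, and there exist words u′, v′ over [n] such that i is 2-move equivalent to u′ (1, 2, …, n−1, n) v′. -/
open scoped Classical

noncomputable section

namespace StringPolytope

/-! ### Words, reduced words, two-moves -/

/-- the simple transposition `s_a = (a, a+1)` acting on `ℕ` (wires are `1, …, n+1`). -/
def sTrans (a : ℕ) : Equiv.Perm ℕ := Equiv.swap a (a + 1)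

/-- product `s_{i₁} ⋯ s_{i_N}` of the simple transpositions of a word. -/
def wordProd (w : List ℕ) : Equiv.Perm ℕ := (w.map sTrans).prod

/-- the longest element `w₀` of the symmetric group on `{1, …, n+1}`,
sending `k ↦ n + 2 - k` there and fixing everything else. -/
def longestPerm (n : ℕ) : Equiv.Perm ℕ :=
  Function.Involutive.toPerm
    (fun k => if 1 ≤ k ∧ k ≤ n + 1 then n + 2 - k else k)
    (by intro k; dsimp only; split_ifs <;> omega)

/-- `w ∈ Σ_{n+1}`: a reduced word of the longest element of `S_{n+1}`,
i.e. a word over `[n] = {1,…,n}` of length `N = n(n+1)/2` whose product is `w₀`. -/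
def IsReduced (n : ℕ) (w : List ℕ) : Prop :=
  w.length = n * (n + 1) / 2 ∧ (∀ a ∈ w, 1 ≤ a ∧ a ≤ n) ∧ wordProd w = longestPerm n

/-- a single 2-move: exchange two adjacent letters `(a, b)` with `|a - b| > 1`. -/
def TwoMoveStep (w w' : List ℕ) : Prop :=
  ∃ u v a b, (a + 1 < b ∨ b + 1 < a) ∧ w = u ++ a :: b :: v ∧ w' = u ++ b :: a :: v

/-- 2-move equivalence of words. -/
def TwoMoveEquiv : List ℕ → List ℕ → Prop := Relation.ReflTransGen TwoMoveStep

/-- `A_n = (1, 2, …, n)`. -/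
def ascWord (n : ℕ) : List ℕ := (List.range n).map (· + 1)

/-- `D_n = (n, n-1, …, 1)`. -/
def descWord (n : ℕ) : List ℕ := (ascWord n).reverse

/-! ### The wiring diagram -/

/-- the letter `i_j` of `w` (1-based index `j`); the node `t_j` lies in column `i_j`. -/
def letterAt (w : List ℕ) (j : ℕ) : ℕ := w.getD (j - 1) 0

/-- `1 ≤ j ≤ N`: `t_j` is an actual node of the diagram. -/
def ValidNode (w : List ℕ) (j : ℕ) : Prop := 1 ≤ j ∧ j ≤ w.length

/-- the column-to-wire assignment just above node `t_j`
(at the top of the diagram, wire `k` is in column `k`). -/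
def stateAbove (w : List ℕ) (j : ℕ) : Equiv.Perm ℕ := wordProd (w.take (j - 1))

/-- the column-to-wire assignment just below node `t_j`. -/
def stateBelow (w : List ℕ) (j : ℕ) : Equiv.Perm ℕ := wordProd (w.take j)

/-- one of the two wires crossing at node `t_j` (the one leaving upward-left). -/
def wireX (w : List ℕ) (j : ℕ) : ℕ := stateAbove w j (letterAt w j)

/-- the other wire crossing at node `t_j` (the one leaving upward-right). -/
def wireY (w : List ℕ) (j : ℕ) : ℕ := stateAbove w j (letterAt w j + 1)

/-- the node `t_j` lies on the wire `ℓ_r`. -/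
def NodeOnWire (w : List ℕ) (j r : ℕ) : Prop := wireX w j = r ∨ wireY w j = r

/-- given one wire `r` at node `t_j`, the other wire crossing there. -/
def otherWire (w : List ℕ) (j r : ℕ) : ℕ := if wireX w j = r then wireY w j else wireX w j

/-- the column of wire `ℓ_r` at the height of node `t_j`. -/
def wireCol (w : List ℕ) (j r : ℕ) : ℕ := (stateBelow w j).symm r

/-- node `t_j` lies strictly below the wire `ℓ_{n+1}`
(which runs from the bottom-left corner to the top-right corner). -/
def BelowWireLast (n : ℕ) (w : List ℕ) (j : ℕ) : Prop :=
  wireCol w j (n + 1) < letterAt w j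

/-- node `t_j` lies strictly above the wire `ℓ_{n+1}`. -/
def AboveWireLast (n : ℕ) (w : List ℕ) (j : ℕ) : Prop :=
  letterAt w j + 1 < wireCol w j (n + 1)

/-- node `t_j` lies strictly below the wire `ℓ_1`
(which runs from the bottom-right corner to the top-left corner). -/
def BelowWireOne (w : List ℕ) (j : ℕ) : Prop :=
  letterAt w j + 1 < wireCol w j 1

/-- node `t_j` lies strictly above the wire `ℓ_1`. -/
def AboveWireOne (w : List ℕ) (j : ℕ) : Prop :=
  wireCol w j 1 < letterAt w j

/-! ### Rigorous (Gleizer–Postnikov) paths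

A path in `G(i, k)` is encoded by `k` together with the list of its switching
nodes, in order of travel.  Wires `ℓ_1, …, ℓ_k` are oriented upward
(decreasing node index) and the remaining wires downward. -/

/-- the (1-based indices of the) nodes lying on wire `ℓ_r`, in order of increasing index. -/
def nodesOn (w : List ℕ) (r : ℕ) : List ℕ :=
  ((List.range w.length).map (· + 1)).filter (fun j => decide (NodeOnWire w j r))

/-- nodes on wire `ℓ_r` strictly between the nodes `t_a` and `t_b`. -/
def segList (w : List ℕ) (r a b : ℕ) : List ℕ :=
  (nodesOn w r).filter (fun j => decide (min a b < j ∧ j < max a b))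

/-- nodes on wire `ℓ_r` strictly below the node `t_a`. -/
def tailList (w : List ℕ) (r a : ℕ) : List ℕ :=
  (nodesOn w r).filter (fun j => decide (a < j))

/-- a forbidden fragment of `G(i, k)`: the path passes straight through node `t_j`
travelling along the wire `ℓ_r`, where the other wire `ℓ_b` crossing there has the same
orientation as `ℓ_r` and (`r < b` if both upward, `r > b` if both downward). -/
def Forbidden (w : List ℕ) (k j r : ℕ) : Prop :=
  (r ≤ k ∧ otherWire w j r ≤ k ∧ r < otherWire w j r) ∨
  (k < r ∧ k < otherWire w j r ∧ otherWire w j r < r)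

/-- travelling in `G(i,k)`: currently on wire `ℓ_r` at node `t_a` (just switched there),
with future switching nodes `ms`; the travel is legal and ends at `L_{k+1}`. -/
def TravelOK (w : List ℕ) (k : ℕ) : ℕ → ℕ → List ℕ → Prop
  | r, a, [] => r = k + 1 ∧ ∀ j ∈ tailList w r a, ¬ Forbidden w k j r
  | r, a, m :: ms =>
      ValidNode w m ∧ NodeOnWire w m r ∧
      (if r ≤ k then m < a else a < m) ∧
      (∀ j ∈ segList w r a m, ¬ Forbidden w k j r) ∧
      TravelOK w k (otherWire w m r) m ms

/-- all nodes visited after the switch at node `t_a` onto wire `ℓ_r`. -/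
def visitTail (w : List ℕ) : ℕ → ℕ → List ℕ → List ℕ
  | r, a, [] => tailList w r a
  | r, a, m :: ms => segList w r a m ++ m :: visitTail w (otherWire w m r) m ms

/-- the list of all nodes visited by the path (switching nodes and straight passes). -/
def visitList (w : List ℕ) (k : ℕ) : List ℕ → List ℕ
  | [] => []
  | m :: ms => tailList w k m ++ m :: visitTail w (otherWire w m k) m ms

/-- `(k, ms)` encodes a rigorous (Gleizer–Postnikov) path in `G(i, k)`:
it starts at `L_k` going up the wire `ℓ_k`, switches wires exactly at the nodes
listed in `ms`, respects the orientation, ends at `L_{k+1}`, contains no forbidden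
fragment and passes through each node at most once. -/
def IsGPPath (n : ℕ) (w : List ℕ) (k : ℕ) (ms : List ℕ) : Prop :=
  1 ≤ k ∧ k ≤ n ∧
  (match ms with
   | [] => False
   | m :: rest =>
       ValidNode w m ∧ NodeOnWire w m k ∧
       (∀ j ∈ tailList w k m, ¬ Forbidden w k j k) ∧
       TravelOK w k (otherWire w m k) m rest) ∧
  (visitList w k ms).Nodup

/-- the set `GP(i)` of all rigorous paths of `G(i)`. -/
def GP (n : ℕ) (w : List ℕ) : Set (ℕ × List ℕ) := {p | IsGPPath n w p.1 p.2}

/-- `|GP(i)|`, the number of rigorous paths. -/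
def numGP (n : ℕ) (w : List ℕ) : ℕ := (GP n w).ncard

/-- the successive switches of a path: `(node, from-wire, to-wire)`. -/
def pathSwitches (w : List ℕ) : ℕ → List ℕ → List (ℕ × ℕ × ℕ)
  | _, [] => []
  | r, m :: ms => (m, r, otherWire w m r) :: pathSwitches w (otherWire w m r) ms

/-- the wire-expression of a path: the successive wires travelled. -/
def wireSeq (w : List ℕ) : ℕ → List ℕ → List ℕ
  | r, [] => [r]
  | r, m :: ms => r :: wireSeq w (otherWire w m r) ms

/-- the peaks of a path: switching nodes where the path switches from an
upward wire to a downward wire. -/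
def peaks (w : List ℕ) (k : ℕ) (ms : List ℕ) : List ℕ :=
  ((pathSwitches w k ms).filter (fun e => decide (e.2.1 ≤ k ∧ k < e.2.2))).map (·.1)

/-! ### String cone, `λ`-cone, string polytope -/

/-- `N = n(n+1)/2`, the number of nodes. -/
abbrev Dim (n : ℕ) : ℕ := n * (n + 1) / 2

/-- the coefficient `a_j` of `t_j` in the string inequality of the path `(k, ms)`:
`+1` if the path switches at `t_j` from `ℓ_r` to `ℓ_s` with `r < s`,
`-1` if it switches with `r > s`, and `0` otherwise. -/
def coeff (w : List ℕ) (k : ℕ) (ms : List ℕ) (j : ℕ) : ℝ :=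
  ((pathSwitches w k ms).map (fun e =>
    if e.1 = j then (if e.2.1 < e.2.2 then (1 : ℝ) else -1) else 0)).sum

/-- the (primitive inward normal) coefficient vector of the string inequality of a path. -/
def normalVec (n : ℕ) (w : List ℕ) (p : ℕ × List ℕ) : Fin (Dim n) → ℝ :=
  fun j => coeff w p.1 p.2 ((j : ℕ) + 1)

/-- the left-hand side `∑ a_j t_j` of the string inequality of the path `p`. -/
def stringIneq (n : ℕ) (w : List ℕ) (p : ℕ × List ℕ) (t : Fin (Dim n) → ℝ) : ℝ :=
  ∑ j : Fin (Dim n), normalVec n w p j * t j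

/-- the string cone `C_i ⊆ ℝ^N`. -/
def stringCone (n : ℕ) (w : List ℕ) : Set (Fin (Dim n) → ℝ) :=
  {t | ∀ p ∈ GP n w, 0 ≤ stringIneq n w p t}

/-- the polyhedron cut out by all string inequalities except the one of `p₀`. -/
def stringConeExcept (n : ℕ) (w : List ℕ) (p₀ : ℕ × List ℕ) : Set (Fin (Dim n) → ℝ) :=
  {t | ∀ p ∈ GP n w, p ≠ p₀ → 0 ≤ stringIneq n w p t}

/-- the coefficient `a_k` in the `λ`-inequality of node `t_j`:
`1` if `t_k` is one column left or right of `t_j`, `-2` if in the same column. -/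
def lamCoeff (w : List ℕ) (j k : ℕ) : ℝ :=
  if letterAt w k = letterAt w j then -2
  else if letterAt w k = letterAt w j + 1 ∨ letterAt w k + 1 = letterAt w j then 1
  else 0

/-- the `λ`-inequality of node `t_{j+1}`:
`t_j ≤ λ_{i_j} + ∑_{k > j} a_k t_k`. -/
def LamIneq (n : ℕ) (w : List ℕ) (lam : ℕ → ℤ) (j : Fin (Dim n)) (t : Fin (Dim n) → ℝ) : Prop :=
  t j ≤ (lam (letterAt w ((j : ℕ) + 1)) : ℝ) +
    ∑ k : Fin (Dim n),
      (if (j : ℕ) < (k : ℕ) then lamCoeff w ((j : ℕ) + 1) ((k : ℕ) + 1) else 0) * t k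

/-- the `λ`-cone `C_i^λ ⊆ ℝ^N`. -/
def lamCone (n : ℕ) (w : List ℕ) (lam : ℕ → ℤ) : Set (Fin (Dim n) → ℝ) :=
  {t | ∀ j, LamIneq n w lam j t}

/-- the polyhedron cut out by all `λ`-inequalities except the one of `j₀`. -/
def lamConeExcept (n : ℕ) (w : List ℕ) (lam : ℕ → ℤ) (j₀ : Fin (Dim n)) :
    Set (Fin (Dim n) → ℝ) :=
  {t | ∀ j, j ≠ j₀ → LamIneq n w lam j t}

/-- the string polytope `Δ_i(λ) = C_i ∩ C_i^λ`. -/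
def stringPolytope (n : ℕ) (w : List ℕ) (lam : ℕ → ℤ) : Set (Fin (Dim n) → ℝ) :=
  stringCone n w ∩ lamCone n w lam

/-- `λ = λ_1 ϖ_1 + ⋯ + λ_n ϖ_n` is a dominant integral weight: all `λ_j ≥ 0`. -/
def Dominant (n : ℕ) (lam : ℕ → ℤ) : Prop := ∀ j, 1 ≤ j → j ≤ n → 0 ≤ lam j

/-- `λ` is a regular dominant integral weight: all `λ_j > 0`. -/
def RegularDominant (n : ℕ) (lam : ℕ → ℤ) : Prop := ∀ j, 1 ≤ j → j ≤ n → 0 < lam j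

/-! ### Unimodular equivalence, Gelfand–Cetlin polytope, facets -/

/-- `P` and `Q` are unimodularly equivalent: `Q = M(P) + v` with `M ∈ GL(m, ℤ)`, `v ∈ ℤ^m`. -/
def UnimodEquiv {m : ℕ} (P Q : Set (Fin m → ℝ)) : Prop :=
  ∃ (M : Matrix (Fin m) (Fin m) ℤ) (v : Fin m → ℤ), IsUnit M.det ∧
    Q = (fun x i => (∑ j, (M i j : ℝ) * x j) + (v i : ℝ)) '' P

/-- the entry `x_{k,j}` (`1 ≤ j ≤ k ≤ n+1`) of a Gelfand–Cetlin pattern, where the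
top row is `x_{n+1,j} = λ_j + ⋯ + λ_n` and `x_{n+1,n+1} = 0`; the pair `(k, j)` is
encoded as the coordinate `k(k-1)/2 + (j-1)` of `ℝ^N`. -/
def gcX (n : ℕ) (lam : ℕ → ℤ) (x : Fin (Dim n) → ℝ) (k j : ℕ) : ℝ :=
  if k = n + 1 then (if j ≤ n then ∑ t ∈ Finset.Icc j n, (lam t : ℝ) else 0)
  else if h : k * (k - 1) / 2 + (j - 1) < Dim n then x ⟨k * (k - 1) / 2 + (j - 1), h⟩ else 0

/-- the Gelfand–Cetlin polytope `GC(λ) ⊆ ℝ^N`. -/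
def GCPolytope (n : ℕ) (lam : ℕ → ℤ) : Set (Fin (Dim n) → ℝ) :=
  {x | ∀ k j, 1 ≤ k → k ≤ n → 1 ≤ j → j ≤ k →
      gcX n lam x k j ≤ gcX n lam x (k + 1) j ∧
      gcX n lam x (k + 1) (j + 1) ≤ gcX n lam x k j}

/-- a face of a convex set: a convex extreme subset. -/
def IsFaceSet {m : ℕ} (S F : Set (Fin m → ℝ)) : Prop := IsExtreme ℝ S F ∧ Convex ℝ F

/-- a facet: a maximal proper face. -/
def IsFacet {m : ℕ} (S F : Set (Fin m → ℝ)) : Prop :=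
  IsFaceSet S F ∧ F ≠ S ∧ ∀ G, IsFaceSet S G → G ≠ S → F ⊆ G → F = G

/-- the number of facets. -/
def numFacets {m : ℕ} (S : Set (Fin m → ℝ)) : ℕ := {F | IsFacet S F}.ncard

/-- combinatorial equivalence: an inclusion-preserving bijection between face lattices. -/
def CombEquiv {m : ℕ} (S T : Set (Fin m → ℝ)) : Prop :=
  ∃ e : {F // IsFaceSet S F} ≃ {F // IsFaceSet T F},
    ∀ F G : {F // IsFaceSet S F}, F.1 ⊆ G.1 ↔ (e F).1 ⊆ (e G).1

/-! ### Indices, contractions and extensions -/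

/-- the `D`-index `ind_D(i) = |i_D^+|` for a decomposition `i ∼ i_D^- D_n i_D^+`
(independent of the decomposition). -/
def indD (n : ℕ) (w : List ℕ) : ℕ :=
  sInf {s | ∃ u v : List ℕ, v.length = s ∧ TwoMoveEquiv w (u ++ descWord n ++ v)}

/-- the `A`-index `ind_A(i) = |i_A^+|` for a decomposition `i ∼ i_A^- A_n i_A^+`. -/
def indA (n : ℕ) (w : List ℕ) : ℕ :=
  sInf {s | ∃ u v : List ℕ, v.length = s ∧ TwoMoveEquiv w (u ++ ascWord n ++ v)}

/-- `w'` is a `D`-contraction `C_D(w) = i_D^- (i_D^+ - 1)` of `w ∈ Σ_{n+1}`. -/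
def IsContractionD (n : ℕ) (w w' : List ℕ) : Prop :=
  ∃ u v : List ℕ, TwoMoveEquiv w (u ++ descWord n ++ v) ∧ w' = u ++ v.map (· - 1)

/-- `w'` is an `A`-contraction `C_A(w) = (i_A^- - 1) i_A^+` of `w ∈ Σ_{n+1}`. -/
def IsContractionA (n : ℕ) (w w' : List ℕ) : Prop :=
  ∃ u v : List ℕ, TwoMoveEquiv w (u ++ ascWord n ++ v) ∧ w' = u.map (· - 1) ++ v

/-- the `D`-extension `E_D(s) : Σ_{n+1} → Σ_{n+2}`,
`i = i^-(s) i^+(s) ↦ i^-(s) D_{n+1} (i^+(s) + 1)` where `|i^+(s)| = s`. -/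
def extD (n : ℕ) (s : ℕ) (w : List ℕ) : List ℕ :=
  w.take (w.length - s) ++ descWord (n + 1) ++ (w.drop (w.length - s)).map (· + 1)

/-- the `A`-extension `E_A(s) : Σ_{n+1} → Σ_{n+2}`,
`i = i^-(s) i^+(s) ↦ (i^-(s) + 1) A_{n+1} i^+(s)`. -/
def extA (n : ℕ) (s : ℕ) (w : List ℕ) : List ℕ :=
  (w.take (w.length - s)).map (· + 1) ++ ascWord (n + 1) ++ w.drop (w.length - s)

/-- there exists `(σ_1, …, σ_n) ∈ {A, D}^n` (here `true = D`, `false = A`) such that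
`ind_{σ_k}(C_{σ_{k+1}} ∘ ⋯ ∘ C_{σ_n}(i)) = 0` for all `k = n, …, 1`. -/
def SimplicialWord (n : ℕ) (w : List ℕ) : Prop :=
  ∃ (σ : ℕ → Bool) (c : ℕ → List ℕ), c n = w ∧
    ∀ k, 1 ≤ k → k ≤ n →
      (if σ k then IsContractionD k (c k) (c (k - 1)) ∧ indD k (c k) = 0
       else IsContractionA k (c k) (c (k - 1)) ∧ indA k (c k) = 0)


/-- the `D`-coindex `coind_D(i) = |i_D^-|`. -/
def coindD (n : ℕ) (w : List ℕ) : ℕ :=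
  sInf {s | ∃ u v : List ℕ, u.length = s ∧ TwoMoveEquiv w (u ++ descWord n ++ v)}

/-- the `A`-coindex `coind_A(i) = |i_A^-|`. -/
def coindA (n : ℕ) (w : List ℕ) : ℕ :=
  sInf {s | ∃ u v : List ℕ, u.length = s ∧ TwoMoveEquiv w (u ++ ascWord n ++ v)}

/-- the `a`-th (0-based) coordinate of a point of `ℝ^N`. -/
def entry (n : ℕ) (t : Fin (Dim n) → ℝ) (a : ℕ) : ℝ :=
  if h : a < Dim n then t ⟨a, h⟩ else 0

/-- the product of cones
`t_1 ≥ 0`, `t_2 ≥ t_3 ≥ 0`, …, `t_{N-n+1} ≥ ⋯ ≥ t_N ≥ 0` (in `ℝ^N`, 1-based: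
for `k = 1, …, n` the chain `t_{k(k-1)/2+1} ≥ ⋯ ≥ t_{k(k-1)/2+k} ≥ 0`). -/
def chainCone (n : ℕ) : Set (Fin (Dim n) → ℝ) :=
  {t | ∀ k j, 1 ≤ k → k ≤ n → 1 ≤ j → j ≤ k →
    (if j = k then 0 else entry n t (k * (k - 1) / 2 + j)) ≤
      entry n t (k * (k - 1) / 2 + (j - 1))}

/-! In a reduced word of `w₀` every letter raises the number of inversions, so no two wires
cross twice.  Hence the wire `n + 1` only ever moves left, crossing at letters
`n, n - 1, …, 1` in this order.  A letter read while this wire sits in column `c + 1` and that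
is not the next crossing `c` is either smaller than `c`, and stays to the left of the remaining
crossings, or larger than `c + 1`, and commutes with all of them to their right.
Relabelling `a ↦ n + 1 - a` is conjugation by `w₀`; it preserves reduced words of `w₀` and
turns `D_n` into `A_n`. -/

lemma TwoMoveStep.append_left (x : List ℕ) {w w' : List ℕ} (h : TwoMoveStep w w') :
    TwoMoveStep (x ++ w) (x ++ w') := by
  obtain ⟨u, v, a, b, hab, rfl, rfl⟩ := h
  exact ⟨x ++ u, v, a, b, hab, by simp, by simp⟩

lemma TwoMoveStep.append_right (x : List ℕ) {w w' : List ℕ} (h : TwoMoveStep w w') :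
    TwoMoveStep (w ++ x) (w' ++ x) := by
  obtain ⟨u, v, a, b, hab, rfl, rfl⟩ := h
  exact ⟨u, v ++ x, a, b, hab, by simp, by simp⟩

lemma TwoMoveStep.perm {w w' : List ℕ} (h : TwoMoveStep w w') : w.Perm w' := by
  obtain ⟨u, v, a, b, -, rfl, rfl⟩ := h
  exact (List.Perm.swap b a v).append_left u

lemma TwoMoveEquiv.append_left (x : List ℕ) {w w' : List ℕ} (h : TwoMoveEquiv w w') :
    TwoMoveEquiv (x ++ w) (x ++ w') :=
  h.lift (x ++ ·) fun _ _ => TwoMoveStep.append_left x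

lemma TwoMoveEquiv.append_right (x : List ℕ) {w w' : List ℕ} (h : TwoMoveEquiv w w') :
    TwoMoveEquiv (w ++ x) (w' ++ x) :=
  h.lift (· ++ x) fun _ _ => TwoMoveStep.append_right x

lemma TwoMoveEquiv.perm {w w' : List ℕ} (h : TwoMoveEquiv w w') : w.Perm w' := by
  induction h with
  | refl => exact .refl w
  | tail _ hstep ih => exact ih.trans hstep.perm

lemma TwoMoveEquiv.forall_mem_of_append {p : ℕ → Prop} {w u x v : List ℕ}
    (h : TwoMoveEquiv w (u ++ x ++ v)) (hw : ∀ a ∈ w, p a) :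
    (∀ a ∈ u, p a) ∧ (∀ a ∈ v, p a) :=
  ⟨fun a ha => hw a (h.perm.mem_iff.2 (by simp [ha])),
    fun a ha => hw a (h.perm.mem_iff.2 (by simp [ha]))⟩

lemma twoMoveEquiv_cons_concat {a : ℕ} :
    ∀ {u : List ℕ}, (∀ b ∈ u, a + 1 < b ∨ b + 1 < a) → TwoMoveEquiv (a :: u) (u ++ [a])
  | [], _ => .refl
  | b :: u, h =>
    have hstep : TwoMoveStep (a :: b :: u) (b :: a :: u) := ⟨[], u, a, b, h b (by simp), rfl, rfl⟩
    .head hstep <| (twoMoveEquiv_cons_concat fun c hc => h c (by simp [hc])).append_left [b]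

lemma descWord_succ (n : ℕ) : descWord (n + 1) = (n + 1) :: descWord n := by
  simp [descWord, ascWord, List.range_succ]

lemma mem_descWord {n a : ℕ} : a ∈ descWord n ↔ 1 ≤ a ∧ a ≤ n := by
  simp only [descWord, ascWord, List.mem_reverse, List.mem_map, List.mem_range]
  constructor
  · rintro ⟨b, hb, rfl⟩; omega
  · intro h; exact ⟨a - 1, by omega, by omega⟩

lemma sTrans_apply (a x : ℕ) :
    sTrans a x = if x = a then a + 1 else if x = a + 1 then a else x := by
  simp [sTrans, Equiv.swap_apply_def]

lemma sTrans_self (a : ℕ) : sTrans a a = a + 1 := Equiv.swap_apply_left _ _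

lemma sTrans_add_one (a : ℕ) : sTrans a (a + 1) = a := Equiv.swap_apply_right _ _

lemma sTrans_sTrans (a x : ℕ) : sTrans a (sTrans a x) = x :=
  Equiv.swap_apply_self _ _ _

lemma wordProd_cons (a : ℕ) (w : List ℕ) : wordProd (a :: w) = sTrans a * wordProd w := by
  simp [wordProd]

lemma wordProd_cons_symm_apply (a : ℕ) (w : List ℕ) (p : ℕ) :
    (wordProd (a :: w)).symm p = (wordProd w).symm (sTrans a p) := by
  rw [wordProd_cons, Equiv.symm_apply_eq, Equiv.Perm.mul_apply, Equiv.apply_symm_apply,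
    sTrans_sTrans]

/-- A wire in column `p` is moved by the letter `a` to column `sTrans a p`; it moves right
exactly when `a = p`. -/
def NeverMovesRight : List ℕ → ℕ → Prop
  | [], _ => True
  | a :: w, p => a ≠ p ∧ NeverMovesRight w (sTrans a p)

lemma twoMoveEquiv_cons_append_descWord {u : List ℕ} {c : ℕ} (hu : ∀ b ∈ u, b < c)
    (v : List ℕ) :
    TwoMoveEquiv ((c + 1) :: (u ++ descWord c ++ v)) (u ++ descWord (c + 1) ++ v) := by
  have hcomm : TwoMoveEquiv ((c + 1) :: u) (u ++ [c + 1]) :=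
    twoMoveEquiv_cons_concat fun b hb => Or.inr (by have := hu b hb; omega)
  simpa [descWord_succ] using hcomm.append_right (descWord c ++ v)

lemma twoMoveEquiv_cons_append_descWord_of_lt {u : List ℕ} {a c : ℕ} (hu : ∀ b ∈ u, b < c)
    (ha : c + 1 < a) (v : List ℕ) :
    TwoMoveEquiv (a :: (u ++ descWord c ++ v)) (u ++ descWord c ++ a :: v) := by
  have hcomm : TwoMoveEquiv (a :: (u ++ descWord c)) (u ++ descWord c ++ [a]) := by
    refine twoMoveEquiv_cons_concat fun b hb => Or.inr ?_
    rcases List.mem_append.1 hb with hb | hb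
    · have := hu b hb; omega
    · have := (mem_descWord.1 hb).2; omega
  simpa using hcomm.append_right v

theorem exists_twoMoveEquiv_descWord_of_neverMovesRight :
    ∀ (w : List ℕ) (c : ℕ), (∀ a ∈ w, 1 ≤ a) → NeverMovesRight w (c + 1) →
      (wordProd w).symm (c + 1) = 1 →
      ∃ u v : List ℕ, (∀ a ∈ u, a < c) ∧ TwoMoveEquiv w (u ++ descWord c ++ v)
  | [], c, _, _, hend => by
    obtain rfl : c = 0 := by
      have : c + 1 = 1 := hend
      omega
    exact ⟨[], [], by simp, .refl⟩
  | a :: w, c, hpos, ⟨hne, hleft⟩, hend => by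
    have hpos' : ∀ b ∈ w, 1 ≤ b := fun b hb => hpos b (by simp [hb])
    rw [wordProd_cons_symm_apply] at hend
    by_cases hcross : a = c
    · obtain ⟨c, rfl⟩ : ∃ c', a = c' + 1 := ⟨a - 1, by have := hpos a (by simp); omega⟩
      subst hcross
      rw [sTrans_add_one] at hleft hend
      obtain ⟨u, v, hu, he⟩ :=
        exists_twoMoveEquiv_descWord_of_neverMovesRight w c hpos' hleft hend
      refine ⟨u, v, fun b hb => by have := hu b hb; omega, ?_⟩
      exact (he.append_left [c + 1]).trans (twoMoveEquiv_cons_append_descWord hu v)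
    · have hstay : sTrans a (c + 1) = c + 1 := by
        rw [sTrans_apply]; split_ifs <;> omega
      rw [hstay] at hleft hend
      obtain ⟨u, v, hu, he⟩ :=
        exists_twoMoveEquiv_descWord_of_neverMovesRight w c hpos' hleft hend
      rcases Nat.lt_or_gt_of_ne hcross with hlt | hgt
      · exact ⟨a :: u, v, by simpa [hlt] using hu, by simpa using he.append_left [a]⟩
      · refine ⟨u, a :: v, hu, ?_⟩
        exact (he.append_left [a]).trans
          (twoMoveEquiv_cons_append_descWord_of_lt hu (by omega) v)

open Finset in
def invPairs (n : ℕ) (π : Equiv.Perm ℕ) : Finset (ℕ × ℕ) :=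
  {p ∈ Icc 1 (n + 1) ×ˢ Icc 1 (n + 1) | p.1 < p.2 ∧ π p.2 < π p.1}

lemma mem_invPairs {n : ℕ} {π : Equiv.Perm ℕ} {p : ℕ × ℕ} :
    p ∈ invPairs n π ↔
      (1 ≤ p.1 ∧ p.1 ≤ n + 1) ∧ (1 ≤ p.2 ∧ p.2 ≤ n + 1) ∧ p.1 < p.2 ∧ π p.2 < π p.1 := by
  simp only [invPairs, Finset.mem_filter, Finset.mem_product, Finset.mem_Icc, and_assoc]

lemma longestPerm_apply (n x : ℕ) :
    longestPerm n x = if 1 ≤ x ∧ x ≤ n + 1 then n + 2 - x else x := rfl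

lemma card_invPairs_one (n : ℕ) : (invPairs n 1).card = 0 := by
  simp only [Finset.card_eq_zero, Finset.eq_empty_iff_forall_notMem, mem_invPairs,
    Equiv.Perm.one_apply]
  omega

lemma card_invPairs_longestPerm (n : ℕ) : (invPairs n (longestPerm n)).card = n * (n + 1) / 2 := by
  have hall : invPairs n (longestPerm n) =
      {p ∈ Finset.Icc 1 (n + 1) ×ˢ Finset.Icc 1 (n + 1) | p.1 < p.2} := by
    refine Finset.filter_congr fun p hp => ?_
    simp only [Finset.mem_product, Finset.mem_Icc] at hp
    rw [longestPerm_apply, longestPerm_apply]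
    split_ifs <;> omega
  rw [hall, Finset.card_product_filter_lt, Nat.card_Icc, Nat.add_sub_cancel,
    Nat.choose_two_right, Nat.add_sub_cancel, Nat.mul_comm]

lemma sTrans_bounds_iff {n a x : ℕ} (ha : 1 ≤ a ∧ a ≤ n) :
    1 ≤ sTrans a x ∧ sTrans a x ≤ n + 1 ↔ 1 ≤ x ∧ x ≤ n + 1 := by
  rw [sTrans_apply]; split_ifs <;> omega

lemma mem_erase_invPairs_mul_sTrans {n a : ℕ} (ha : 1 ≤ a ∧ a ≤ n) (π : Equiv.Perm ℕ)
    (p : ℕ × ℕ) :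
    p ∈ (invPairs n (π * sTrans a)).erase (a, a + 1) ↔
      Prod.map (sTrans a) (sTrans a) p ∈ (invPairs n π).erase (a, a + 1) := by
  obtain ⟨x, y⟩ := p
  have hlt : (¬(x = a ∧ y = a + 1) ∧ x < y) ↔
      (¬(sTrans a x = a ∧ sTrans a y = a + 1) ∧ sTrans a x < sTrans a y) := by
    simp only [sTrans_apply]; split_ifs <;> omega
  simp only [Finset.mem_erase, mem_invPairs, Prod.map, Equiv.Perm.mul_apply, ne_eq,
    Prod.mk.injEq, sTrans_bounds_iff ha]
  tauto

lemma card_invPairs_mul_sTrans_of_lt {n a : ℕ} (ha : 1 ≤ a ∧ a ≤ n) {π : Equiv.Perm ℕ}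
    (hlt : π a < π (a + 1)) :
    (invPairs n (π * sTrans a)).card = (invPairs n π).card + 1 := by
  have hmem : (a, a + 1) ∈ invPairs n (π * sTrans a) :=
    mem_invPairs.2 ⟨by omega, by omega, by omega, by
      rwa [Equiv.Perm.mul_apply, Equiv.Perm.mul_apply, sTrans_self, sTrans_add_one]⟩
  have hnotMem : (a, a + 1) ∉ invPairs n π := fun h => lt_asymm hlt (mem_invPairs.1 h).2.2.2
  have hinv : Function.Involutive (Prod.map (sTrans a) (sTrans a)) :=
    fun p => Prod.ext (sTrans_sTrans a _) (sTrans_sTrans a _)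
  rw [← Finset.card_erase_add_one hmem, ← Finset.erase_eq_of_notMem hnotMem]
  congr 1
  refine Finset.card_nbij' _ _ (fun p hp => (mem_erase_invPairs_mul_sTrans ha π p).1 hp)
    (fun p hp => ?_) (fun p _ => hinv p) (fun p _ => hinv p)
  rw [Finset.mem_coe, mem_erase_invPairs_mul_sTrans ha π, hinv]
  exact Finset.mem_coe.1 hp

lemma mul_sTrans_mul_sTrans (π : Equiv.Perm ℕ) (a : ℕ) : π * sTrans a * sTrans a = π := by
  ext x; simp [sTrans_sTrans]

lemma card_invPairs_mul_sTrans_of_gt {n a : ℕ} (ha : 1 ≤ a ∧ a ≤ n) {π : Equiv.Perm ℕ}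
    (hgt : π (a + 1) < π a) :
    (invPairs n (π * sTrans a)).card + 1 = (invPairs n π).card := by
  have hlt : (π * sTrans a) a < (π * sTrans a) (a + 1) := by
    rwa [Equiv.Perm.mul_apply, Equiv.Perm.mul_apply, sTrans_self, sTrans_add_one]
  simpa [mul_sTrans_mul_sTrans] using (card_invPairs_mul_sTrans_of_lt ha hlt).symm

lemma apply_ne_apply_add_one (π : Equiv.Perm ℕ) (a : ℕ) : π a ≠ π (a + 1) :=
  π.injective.ne (by omega)

lemma mul_wordProd_cons (π : Equiv.Perm ℕ) (a : ℕ) (w : List ℕ) :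
    π * wordProd (a :: w) = π * sTrans a * wordProd w := by
  rw [wordProd_cons, mul_assoc]

lemma card_invPairs_mul_wordProd_le {n : ℕ} :
    ∀ (w : List ℕ) (π : Equiv.Perm ℕ), (∀ a ∈ w, 1 ≤ a ∧ a ≤ n) →
      (invPairs n (π * wordProd w)).card ≤ (invPairs n π).card + w.length
  | [], π, _ => by simp [wordProd]
  | a :: w, π, hw => by
    have ha := hw a (by simp)
    have ih := card_invPairs_mul_wordProd_le w (π * sTrans a) fun b hb => hw b (by simp [hb])
    rw [mul_wordProd_cons, List.length_cons]
    rcases (apply_ne_apply_add_one π a).lt_or_gt with hlt | hgt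
    · have := card_invPairs_mul_sTrans_of_lt ha hlt; omega
    · have := card_invPairs_mul_sTrans_of_gt ha hgt; omega

/-- Each letter of `w` must raise the inversion number, so it never puts the largest label
`n + 1` to the left of a smaller one. -/
theorem neverMovesRight_of_card_invPairs {n : ℕ} :
    ∀ (w : List ℕ) (π : Equiv.Perm ℕ), (∀ a ∈ w, 1 ≤ a ∧ a ≤ n) →
      (∀ x, 1 ≤ x → x ≤ n + 1 → π x ≤ n + 1) →
      (invPairs n (π * wordProd w)).card = (invPairs n π).card + w.length →
      NeverMovesRight w (π.symm (n + 1))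
  | [], _, _, _, _ => trivial
  | a :: w, π, hw, hπ, hcard => by
    have ha := hw a (by simp)
    rw [mul_wordProd_cons, List.length_cons] at hcard
    have hle := card_invPairs_mul_wordProd_le w (π * sTrans a) fun b hb => hw b (by simp [hb])
    have hlt : π a < π (a + 1) := by
      refine (apply_ne_apply_add_one π a).lt_or_gt.resolve_right fun hgt => ?_
      have := card_invPairs_mul_sTrans_of_gt ha hgt; omega
    refine ⟨fun hcol => ?_, ?_⟩
    · have : π a = n + 1 := by rw [hcol, Equiv.apply_symm_apply]
      have := hπ (a + 1) (by omega) (by omega); omega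
    · have hπ' : ∀ x, 1 ≤ x → x ≤ n + 1 → (π * sTrans a) x ≤ n + 1 := fun x h₁ h₂ =>
        hπ _ ((sTrans_bounds_iff ha).2 ⟨h₁, h₂⟩).1 ((sTrans_bounds_iff ha).2 ⟨h₁, h₂⟩).2
      have hsymm : (π * sTrans a).symm (n + 1) = sTrans a (π.symm (n + 1)) := by
        rw [Equiv.symm_apply_eq, Equiv.Perm.mul_apply, sTrans_sTrans, Equiv.apply_symm_apply]
      have := neverMovesRight_of_card_invPairs w (π * sTrans a) (fun b hb => hw b (by simp [hb]))
        hπ' (by have := card_invPairs_mul_sTrans_of_lt ha hlt; omega)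
      rwa [hsymm] at this

lemma longestPerm_symm_apply_add_one (n : ℕ) : (longestPerm n).symm (n + 1) = 1 := by
  rw [Equiv.symm_apply_eq, longestPerm_apply, if_pos (by omega)]; omega

theorem IsReduced.exists_twoMoveEquiv_descWord {n : ℕ} {i : List ℕ} (hi : IsReduced n i) :
    ∃ u v : List ℕ, (∀ a ∈ u, 1 ≤ a ∧ a ≤ n) ∧ (∀ a ∈ v, 1 ≤ a ∧ a ≤ n) ∧
      TwoMoveEquiv i (u ++ descWord n ++ v) := by
  obtain ⟨hlen, hw, hprod⟩ := hi
  have hcard : (invPairs n (1 * wordProd i)).card = (invPairs n 1).card + i.length := by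
    rw [one_mul, hprod, card_invPairs_longestPerm, card_invPairs_one, hlen, zero_add]
  have hleft : NeverMovesRight i (n + 1) :=
    neverMovesRight_of_card_invPairs i 1 hw (fun _ _ hx => hx) hcard
  have hend : (wordProd i).symm (n + 1) = 1 := by rw [hprod, longestPerm_symm_apply_add_one]
  obtain ⟨u, v, -, he⟩ := exists_twoMoveEquiv_descWord_of_neverMovesRight i n
    (fun a ha => (hw a ha).1) hleft hend
  exact ⟨u, v, (he.forall_mem_of_append hw).1, (he.forall_mem_of_append hw).2, he⟩

lemma longestPerm_mul_self (n : ℕ) : longestPerm n * longestPerm n = 1 := by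
  ext x; simp only [Equiv.Perm.mul_apply, longestPerm_apply, Equiv.Perm.one_apply]
  split_ifs <;> omega

lemma sTrans_reflect {n a : ℕ} (ha : 1 ≤ a ∧ a ≤ n) :
    sTrans (n + 1 - a) = longestPerm n * sTrans a * longestPerm n := by
  ext x
  simp only [Equiv.Perm.mul_apply, sTrans_apply, longestPerm_apply]
  split_ifs <;> omega

lemma wordProd_map_reflect {n : ℕ} :
    ∀ w : List ℕ, (∀ a ∈ w, 1 ≤ a ∧ a ≤ n) →
      wordProd (w.map (n + 1 - ·)) = longestPerm n * wordProd w * longestPerm n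
  | [], _ => by simp [wordProd, longestPerm_mul_self]
  | a :: w, hw => by
    rw [List.map_cons, wordProd_cons, wordProd_cons, sTrans_reflect (hw a (by simp)),
      wordProd_map_reflect w fun b hb => hw b (by simp [hb])]
    simp only [mul_assoc]
    rw [← mul_assoc (longestPerm n) (longestPerm n), longestPerm_mul_self, one_mul]

theorem IsReduced.map_reflect {n : ℕ} {i : List ℕ} (hi : IsReduced n i) :
    IsReduced n (i.map (n + 1 - ·)) := by
  obtain ⟨hlen, hw, hprod⟩ := hi
  refine ⟨by simpa using hlen, ?_, ?_⟩
  · simp only [List.mem_map]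
    rintro _ ⟨a, ha, rfl⟩
    have := hw a ha; omega
  · rw [wordProd_map_reflect i hw, hprod, longestPerm_mul_self, one_mul]

lemma TwoMoveEquiv.map_reflect {n : ℕ} {w w' : List ℕ} (h : TwoMoveEquiv w w')
    (hw : ∀ a ∈ w, a ≤ n + 1) : TwoMoveEquiv (w.map (n + 1 - ·)) (w'.map (n + 1 - ·)) := by
  induction h with
  | refl => exact .refl
  | @tail x y hwx hxy ih =>
    refine ih.tail ?_
    obtain ⟨u, v, a, b, hab, rfl, rfl⟩ := hxy
    have ha := hw a ((TwoMoveEquiv.perm hwx).mem_iff.2 (by simp))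
    have hb := hw b ((TwoMoveEquiv.perm hwx).mem_iff.2 (by simp))
    exact ⟨u.map (n + 1 - ·), v.map (n + 1 - ·), n + 1 - a, n + 1 - b, by omega, by simp,
      by simp⟩

lemma map_reflect_map_reflect {n : ℕ} {w : List ℕ} (hw : ∀ a ∈ w, a ≤ n + 1) :
    (w.map (n + 1 - ·)).map (n + 1 - ·) = w := by
  rw [List.map_map]
  refine List.map_congr_left (fun a ha => ?_) |>.trans (List.map_id w)
  have := hw a ha
  simp only [Function.comp_apply, id]; omega

lemma descWord_map_reflect (n : ℕ) : (descWord n).map (n + 1 - ·) = ascWord n := by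
  refine List.ext_getElem (by simp [descWord, ascWord]) fun k h₁ h₂ => ?_
  simp only [descWord, ascWord, List.length_map, List.length_reverse, List.length_range] at h₁ h₂
  simp only [descWord, ascWord, List.map_reverse, List.map_map, List.getElem_reverse,
    List.getElem_map, List.getElem_range, List.length_map, List.length_range, Function.comp_apply]
  omega

theorem IsReduced.exists_twoMoveEquiv_ascWord {n : ℕ} {i : List ℕ} (hi : IsReduced n i) :
    ∃ u v : List ℕ, (∀ a ∈ u, 1 ≤ a ∧ a ≤ n) ∧ (∀ a ∈ v, 1 ≤ a ∧ a ≤ n) ∧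
      TwoMoveEquiv i (u ++ ascWord n ++ v) := by
  have hw : ∀ a ∈ i, a ≤ n + 1 := fun a ha => by have := hi.2.1 a ha; omega
  obtain ⟨u, v, -, -, he⟩ := hi.map_reflect.exists_twoMoveEquiv_descWord
  have he' := he.map_reflect (n := n) (by simp only [List.mem_map]; rintro _ ⟨a, -, rfl⟩; omega)
  rw [map_reflect_map_reflect hw, List.map_append, List.map_append, descWord_map_reflect] at he'
  exact ⟨_, _, (he'.forall_mem_of_append hi.2.1).1, (he'.forall_mem_of_append hi.2.1).2, he'⟩

theorem statement0_general (n : ℕ) (i : List ℕ) (hi : IsReduced n i) :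
    (∃ u v : List ℕ, (∀ a ∈ u, 1 ≤ a ∧ a ≤ n) ∧ (∀ a ∈ v, 1 ≤ a ∧ a ≤ n) ∧
      TwoMoveEquiv i (u ++ descWord n ++ v)) ∧
    (∃ u' v' : List ℕ, (∀ a ∈ u', 1 ≤ a ∧ a ≤ n) ∧ (∀ a ∈ v', 1 ≤ a ∧ a ≤ n) ∧
      TwoMoveEquiv i (u' ++ ascWord n ++ v')) :=
  ⟨hi.exists_twoMoveEquiv_descWord, hi.exists_twoMoveEquiv_ascWord⟩

/-- Proposition on D/A decompositions.
For every reduced word `i ∈ Σ_{n+1}` of the longest element of `S_{n+1}`, there exist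
words `u, v` over `[n]` with `i ∼ u (n, n-1, …, 1) v`, and words `u', v'` over `[n]`
with `i ∼ u' (1, 2, …, n) v'`. -/
theorem statement0 (n : ℕ) (hn : 1 ≤ n) (i : List ℕ) (hi : IsReduced n i) :
    (∃ u v : List ℕ, (∀ a ∈ u, 1 ≤ a ∧ a ≤ n) ∧ (∀ a ∈ v, 1 ≤ a ∧ a ≤ n) ∧
      TwoMoveEquiv i (u ++ descWord n ++ v)) ∧
    (∃ u' v' : List ℕ, (∀ a ∈ u', 1 ≤ a ∧ a ≤ n) ∧ (∀ a ∈ v', 1 ≤ a ∧ a ≤ n) ∧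
      TwoMoveEquiv i (u' ++ ascWord n ++ v')) :=
  statement0_general n i hi

end StringPolytope
end
end

section
/- For i ∈ Σ_{n+1}, in any decomposition i ∼ u D_n v (2-move equivalence) with D_n = (n, n−1, …, 1), the length |v| is independent of the decomposition and equals the number of nodes of the wiring diagram G(i) lying below the wire ℓ_{n+1}, and |u| equals the number of nodes above ℓ_{n+1}; similarly, in any decomposition i ∼ u′ A_n v′ with A_n = (1, 2, …, n), |v′| equals the number of nodes below ℓ_1 and |u′| the number of nodes above ℓ_1. In particular the indices ind_D, ind_A and coindices coind_D, coind_A are well-defined functions on 2-move equivalence classes of Σ_{n+1}. -/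
/-!
Every wire meets each of the other `n` wires, while the `N = n(n+1)/2` nodes carry exactly
`2N = n(n+1)` wire-node incidences; hence every wire meets exactly `n` nodes. In a word
`u D_n v` the wire entering the block `D_n` in column `n+1` is pushed through all `n` nodes of the
block to column `1`, so it meets no other node: it is `ℓ_{n+1}`, running down the right edge of
the diagram above the block and down the left edge below it. Thus the `|u|` nodes above the block
lie above `ℓ_{n+1}` and the `|v|` nodes below the block lie below it. A 2-move commutes two nodes
in columns at distance at least two, which does not change on which side of any wire a node lies,
so both counts are invariants of the 2-move class. The case of `A_n` and `ℓ_1` is the mirror image.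
-/

open scoped Classical

noncomputable section

namespace StringPolytope

lemma sTrans_symm (a : ℕ) : (sTrans a).symm = sTrans a := Equiv.symm_swap _ _

lemma sTrans_mul_comm {a b : ℕ} (hab : a + 1 < b ∨ b + 1 < a) :
    sTrans a * sTrans b = sTrans b * sTrans a := by
  ext x
  simp only [Equiv.Perm.mul_apply, sTrans_apply]
  split_ifs <;> omega

lemma sTrans_apply_comm {a b : ℕ} (hab : a + 1 < b ∨ b + 1 < a) (x : ℕ) :
    sTrans a (sTrans b x) = sTrans b (sTrans a x) := by
  rw [← Equiv.Perm.mul_apply, sTrans_mul_comm hab, Equiv.Perm.mul_apply]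

lemma sTrans_lt_iff {a b : ℕ} (hab : a + 1 < b ∨ b + 1 < a) (c : ℕ) :
    sTrans b c < a ↔ c < a := by
  rw [sTrans_apply]; split_ifs <;> omega

lemma lt_sTrans_iff {a b : ℕ} (hab : a + 1 < b ∨ b + 1 < a) (c : ℕ) :
    a + 1 < sTrans b c ↔ a + 1 < c := by
  rw [sTrans_apply]; split_ifs <;> omega

lemma eq_of_sTrans_lt_sTrans {a x y : ℕ} (hxy : x < y) (h : sTrans a y < sTrans a x) :
    x = a ∧ y = a + 1 := by
  rw [sTrans_apply, sTrans_apply] at h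
  split_ifs at h <;> omega

lemma mem_Icc_sTrans_iff {n a : ℕ} (ha : 1 ≤ a ∧ a ≤ n) (x : ℕ) :
    sTrans a x ∈ Finset.Icc 1 (n + 1) ↔ x ∈ Finset.Icc 1 (n + 1) := by
  simp only [Finset.mem_Icc, sTrans_apply]
  split_ifs <;> omega

lemma wordProd_append (u v : List ℕ) : wordProd (u ++ v) = wordProd u * wordProd v := by
  simp [wordProd]

lemma mem_Icc_wordProd_iff {n : ℕ} {w : List ℕ} (hw : ∀ a ∈ w, 1 ≤ a ∧ a ≤ n) (x : ℕ) :
    wordProd w x ∈ Finset.Icc 1 (n + 1) ↔ x ∈ Finset.Icc 1 (n + 1) := by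
  induction w with
  | nil => simp [wordProd]
  | cons a w ih =>
    rw [wordProd_cons, Equiv.Perm.mul_apply, mem_Icc_sTrans_iff (hw a (by simp)),
      ih fun b hb => hw b (by simp [hb])]

lemma wordProd_take_mem_Icc {n : ℕ} {w : List ℕ} (hw : ∀ a ∈ w, 1 ≤ a ∧ a ≤ n) (j : ℕ) {x : ℕ}
    (hx : x ∈ Finset.Icc 1 (n + 1)) : wordProd (w.take j) x ∈ Finset.Icc 1 (n + 1) :=
  (mem_Icc_wordProd_iff (fun a ha => hw a (List.mem_of_mem_take ha)) x).mpr hx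

lemma longestPerm_symm (n : ℕ) : (longestPerm n).symm = longestPerm n :=
  Function.Involutive.toPerm_symm _

lemma wireCol_zero (w : List ℕ) (r : ℕ) : wireCol w 0 r = r := rfl

lemma wireX_ne_wireY (w : List ℕ) (j : ℕ) : wireX w j ≠ wireY w j :=
  fun h => by simpa using (stateAbove w j).injective h

section WiringDiagram

variable {w : List ℕ}

lemma wireCol_length {n : ℕ} (hw : wordProd w = longestPerm n) {r : ℕ}
    (hr : r ∈ Finset.Icc 1 (n + 1)) : wireCol w w.length r = n + 2 - r := by
  rw [wireCol, stateBelow, List.take_length, hw, longestPerm_symm]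
  exact if_pos (Finset.mem_Icc.mp hr)

lemma letterAt_mem {n : ℕ} (hw : ∀ a ∈ w, 1 ≤ a ∧ a ≤ n) {j : ℕ} (hj : ValidNode w j) :
    1 ≤ letterAt w j ∧ letterAt w j ≤ n := by
  unfold letterAt
  rw [List.getD_eq_getElem _ _ (by unfold ValidNode at hj; omega)]
  exact hw _ (List.getElem_mem _)

lemma stateBelow_eq_stateAbove_mul {j : ℕ} (hj : ValidNode w j) :
    stateBelow w j = stateAbove w j * sTrans (letterAt w j) := by
  obtain ⟨hj1, hj2⟩ := hj
  obtain ⟨k, rfl⟩ : ∃ k, j = k + 1 := ⟨j - 1, by omega⟩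
  rw [stateBelow, stateAbove, letterAt, Nat.add_sub_cancel, List.getD_eq_getElem _ _ (by omega),
    ← List.take_concat_get' w k (by omega), wordProd_append]
  simp [wordProd]

lemma wireCol_succ {j : ℕ} (hj : j < w.length) (r : ℕ) :
    wireCol w (j + 1) r = sTrans (letterAt w (j + 1)) (wireCol w j r) := by
  rw [wireCol, stateBelow_eq_stateAbove_mul ⟨by omega, hj⟩, Equiv.Perm.mul_def,
    Equiv.symm_trans_apply, sTrans_symm]
  rfl

lemma nodeOnWire_iff {j : ℕ} (hj : ValidNode w j) (r : ℕ) :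
    NodeOnWire w j r ↔ wireCol w j r = letterAt w j ∨ wireCol w j r = letterAt w j + 1 := by
  rw [wireCol, stateBelow_eq_stateAbove_mul hj, Equiv.Perm.mul_def, Equiv.symm_trans_apply,
    sTrans_symm, NodeOnWire, wireX, wireY, ← Equiv.eq_symm_apply, ← Equiv.eq_symm_apply]
  generalize (stateAbove w j).symm r = c
  rw [sTrans_apply]
  split_ifs <;> omega

lemma wireCol_eq_of_forall_not_nodeOnWire {r j j' : ℕ} (hjj' : j ≤ j') (hj' : j' ≤ w.length)
    (h : ∀ k, j < k → k ≤ j' → ¬ NodeOnWire w k r) : wireCol w j' r = wireCol w j r := by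
  induction j', hjj' using Nat.le_induction with
  | base => rfl
  | succ k hjk ih =>
    have hk := h (k + 1) (by omega) le_rfl
    rw [nodeOnWire_iff ⟨by omega, hj'⟩] at hk
    rw [← ih (by omega) fun m hm hm' => h m hm (by omega)]
    rw [wireCol_succ (by omega), sTrans_apply] at hk ⊢
    split_ifs at hk ⊢ <;> omega

lemma otherWire_eq {j r y : ℕ} (hr : NodeOnWire w j r) (hy : NodeOnWire w j y) (hyr : y ≠ r) :
    otherWire w j r = y := by
  unfold otherWire NodeOnWire at *
  split_ifs <;> grind

variable {n : ℕ}

lemma card_filter_nodeOnWire (hw : ∀ a ∈ w, 1 ≤ a ∧ a ≤ n) {j : ℕ} (hj : ValidNode w j) :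
    ((Finset.Icc 1 (n + 1)).filter (NodeOnWire w j ·)).card = 2 := by
  have : (Finset.Icc 1 (n + 1)).filter (NodeOnWire w j ·) = {wireX w j, wireY w j} := by
    ext r
    rw [Finset.mem_filter, Finset.mem_insert, Finset.mem_singleton, NodeOnWire]
    constructor
    · rintro ⟨-, h | h⟩ <;> simp [h]
    · have := letterAt_mem hw hj
      rintro (rfl | rfl)
      · exact ⟨wordProd_take_mem_Icc hw _ (Finset.mem_Icc.mpr (by omega)), Or.inl rfl⟩
      · exact ⟨wordProd_take_mem_Icc hw _ (Finset.mem_Icc.mpr (by omega)), Or.inr rfl⟩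
  rw [this, Finset.card_pair (wireX_ne_wireY w j)]

end WiringDiagram

def wireNodes (w : List ℕ) (r : ℕ) : Finset ℕ :=
  (Finset.Icc 1 w.length).filter (NodeOnWire w · r)

section Crossings

variable {n : ℕ} {w : List ℕ}

lemma sum_card_wireNodes (hw : ∀ a ∈ w, 1 ≤ a ∧ a ≤ n) :
    ∑ r ∈ Finset.Icc 1 (n + 1), (wireNodes w r).card = 2 * w.length := by
  have := Finset.sum_card_bipartiteAbove_eq_sum_card_bipartiteBelow (s := Finset.Icc 1 (n + 1))
    (t := Finset.Icc 1 w.length) (fun r j => NodeOnWire w j r)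
  simp only [Finset.bipartiteAbove, Finset.bipartiteBelow] at this
  simp only [wireNodes, this]
  rw [Finset.sum_congr rfl fun j hj => card_filter_nodeOnWire hw (Finset.mem_Icc.mp hj),
    Finset.sum_const, Nat.card_Icc, smul_eq_mul, Nat.add_sub_cancel, mul_comm]

lemma exists_nodeOnWire_of_lt (hw : wordProd w = longestPerm n) {x y : ℕ}
    (hx : x ∈ Finset.Icc 1 (n + 1)) (hy : y ∈ Finset.Icc 1 (n + 1)) (hxy : x < y) :
    ∃ j, ValidNode w j ∧ NodeOnWire w j x ∧ NodeOnWire w j y := by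
  have hend : ¬ wireCol w w.length x < wireCol w w.length y := by
    have := Finset.mem_Icc.mp hx; have := Finset.mem_Icc.mp hy
    rw [wireCol_length hw hx, wireCol_length hw hy]; omega
  have hinv : ∃ k, ¬ wireCol w k x < wireCol w k y := ⟨w.length, hend⟩
  -- the first level at which the two wires have swapped order
  obtain ⟨k, hk⟩ : ∃ k, Nat.find hinv = k + 1 :=
    Nat.exists_eq_succ_of_ne_zero fun h => Nat.find_spec hinv (by rw [h]; exact hxy)
  have hkL : k < w.length := by have := Nat.find_min' hinv hend; omega
  have hbefore : wireCol w k x < wireCol w k y := by_contra fun h => Nat.find_min hinv (by omega) h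
  have hafter : ¬ wireCol w (k + 1) x < wireCol w (k + 1) y := hk ▸ Nat.find_spec hinv
  rw [wireCol_succ hkL, wireCol_succ hkL] at hafter
  have hne : sTrans (letterAt w (k + 1)) (wireCol w k x) ≠
      sTrans (letterAt w (k + 1)) (wireCol w k y) := (Equiv.injective _).ne hbefore.ne
  obtain ⟨hxa, hya⟩ := eq_of_sTrans_lt_sTrans (a := letterAt w (k + 1)) hbefore (by omega)
  have hj : ValidNode w (k + 1) := ⟨by omega, hkL⟩
  refine ⟨k + 1, hj, ?_, ?_⟩ <;>
    rw [nodeOnWire_iff hj, wireCol_succ hkL, sTrans_apply] <;> split_ifs <;> omega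

lemma le_card_wireNodes (hw : wordProd w = longestPerm n) {r : ℕ}
    (hr : r ∈ Finset.Icc 1 (n + 1)) : n ≤ (wireNodes w r).card := by
  have hcard : ((Finset.Icc 1 (n + 1)).erase r).card = n := by
    rw [Finset.card_erase_of_mem hr, Nat.card_Icc]; omega
  rw [← hcard]
  refine Finset.card_le_card_of_surjOn (otherWire w · r) fun y hy => ?_
  obtain ⟨hyr, hy⟩ := Finset.mem_erase.mp hy
  obtain ⟨j, hj, hjr, hjy⟩ : ∃ j, ValidNode w j ∧ NodeOnWire w j r ∧ NodeOnWire w j y := by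
    rcases Nat.lt_or_gt_of_ne hyr with h | h
    · obtain ⟨j, hj, h1, h2⟩ := exists_nodeOnWire_of_lt hw hy hr h
      exact ⟨j, hj, h2, h1⟩
    · exact exists_nodeOnWire_of_lt hw hr hy h
  exact ⟨j, Finset.mem_filter.mpr ⟨Finset.mem_Icc.mpr hj, hjr⟩, otherWire_eq hjr hjy hyr⟩

lemma card_wireNodes (hred : IsReduced n w) {r : ℕ} (hr : r ∈ Finset.Icc 1 (n + 1)) :
    (wireNodes w r).card = n := by
  obtain ⟨hlen, hletters, hw⟩ := hred
  have hsum : ∑ _s ∈ Finset.Icc 1 (n + 1), n = ∑ s ∈ Finset.Icc 1 (n + 1), (wireNodes w s).card := by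
    rw [sum_card_wireNodes hletters, hlen, Finset.sum_const, Nat.card_Icc, smul_eq_mul,
      Nat.mul_div_cancel' (Nat.even_mul_succ_self n).two_dvd, Nat.add_sub_cancel, mul_comm]
  exact ((Finset.sum_eq_sum_iff_of_le fun s hs => le_card_wireNodes hw hs).mp hsum r hr).symm

end Crossings

section Block

variable {n p r : ℕ} {w : List ℕ}

lemma wireNodes_eq_Ioc (hred : IsReduced n w) (hr : r ∈ Finset.Icc 1 (n + 1))
    (hpn : p + n ≤ w.length) (hblock : ∀ t < n, NodeOnWire w (p + t + 1) r) :
    wireNodes w r = Finset.Ioc p (p + n) := by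
  refine (Finset.eq_of_subset_of_card_le (fun j hj => ?_) ?_).symm
  · obtain ⟨h1, h2⟩ := Finset.mem_Ioc.mp hj
    refine Finset.mem_filter.mpr ⟨Finset.mem_Icc.mpr ⟨by omega, by omega⟩, ?_⟩
    simpa [show p + (j - p - 1) + 1 = j by omega] using hblock (j - p - 1) (by omega)
  · rw [card_wireNodes hred hr, Nat.card_Ioc]; omega

lemma nodeOnWire_iff_of_block (hred : IsReduced n w) (hr : r ∈ Finset.Icc 1 (n + 1))
    (hpn : p + n ≤ w.length) (hblock : ∀ t < n, NodeOnWire w (p + t + 1) r) {j : ℕ}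
    (hj : ValidNode w j) : NodeOnWire w j r ↔ p < j ∧ j ≤ p + n := by
  rw [← Finset.mem_Ioc, ← wireNodes_eq_Ioc hred hr hpn hblock, wireNodes, Finset.mem_filter,
    Finset.mem_Icc]
  exact (and_iff_right hj).symm

lemma wireCol_of_block (hred : IsReduced n w) (hr : r ∈ Finset.Icc 1 (n + 1))
    (hpn : p + n ≤ w.length) (hblock : ∀ t < n, NodeOnWire w (p + t + 1) r) {j : ℕ}
    (hj : j ≤ w.length) :
    (j ≤ p → wireCol w j r = r) ∧ (p + n ≤ j → wireCol w j r = n + 2 - r) := by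
  have hon := fun k (hk : ValidNode w k) => nodeOnWire_iff_of_block hred hr hpn hblock hk
  refine ⟨fun hjp => ?_, fun hjp => ?_⟩
  · rw [wireCol_eq_of_forall_not_nodeOnWire (Nat.zero_le j) hj fun k hk hkj =>
      by rw [hon k ⟨hk, by omega⟩]; omega, wireCol_zero]
  · rw [← wireCol_eq_of_forall_not_nodeOnWire hj le_rfl fun k hk hkL =>
      by rw [hon k ⟨by omega, hkL⟩]; omega, wireCol_length hred.2.2 hr]

lemma wireCol_letterAt_of_block (hred : IsReduced n w) (hr : r ∈ Finset.Icc 1 (n + 1))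
    (hpn : p + n ≤ w.length) (hblock : ∀ t < n, NodeOnWire w (p + t + 1) r) {j : ℕ}
    (hj : ValidNode w j) :
    (wireCol w j r = letterAt w j ∨ wireCol w j r = letterAt w j + 1 ↔ p < j ∧ j ≤ p + n) ∧
      ((j ≤ p → wireCol w j r = r) ∧ (p + n ≤ j → wireCol w j r = n + 2 - r)) ∧
      (1 ≤ letterAt w j ∧ letterAt w j ≤ n) :=
  ⟨(nodeOnWire_iff hj r).symm.trans (nodeOnWire_iff_of_block hred hr hpn hblock hj),
    wireCol_of_block hred hr hpn hblock hj.2, letterAt_mem hred.2.1 hj⟩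

end Block

lemma length_ascWord (n : ℕ) : (ascWord n).length = n := by simp [ascWord]

lemma length_descWord (n : ℕ) : (descWord n).length = n := by simp [descWord, length_ascWord]

lemma letterAt_append_descWord (u v : List ℕ) {n t : ℕ} (ht : t < n) :
    letterAt (u ++ descWord n ++ v) (u.length + t + 1) = n - t := by
  grind [letterAt, descWord, ascWord]

lemma letterAt_append_ascWord (u v : List ℕ) {n t : ℕ} (ht : t < n) :
    letterAt (u ++ ascWord n ++ v) (u.length + t + 1) = t + 1 := by
  grind [letterAt, ascWord]

/- A node is right of `ℓ_{n+1}` iff it is below it (`BelowWireLast`), and right of `ℓ_1` iff it is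
above it (`AboveWireOne`); symmetrically for nodes left of a wire. -/
def nodesRightOf (w : List ℕ) (r : ℕ) : Set ℕ :=
  {j | ValidNode w j ∧ wireCol w j r < letterAt w j}

def nodesLeftOf (w : List ℕ) (r : ℕ) : Set ℕ :=
  {j | ValidNode w j ∧ letterAt w j + 1 < wireCol w j r}

lemma ncard_setOf_validNode {w : List ℕ} {P : ℕ → Prop} {lo hi : ℕ} (hhi : hi ≤ w.length)
    (h : ∀ j, 1 ≤ j → j ≤ w.length → (P j ↔ lo < j ∧ j ≤ hi)) :
    {j | ValidNode w j ∧ P j}.ncard = hi - lo := by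
  have : {j | ValidNode w j ∧ P j} = ↑(Finset.Ioc lo hi) := by
    ext j
    simp only [Set.mem_ofPred_eq, Finset.coe_Ioc, Set.mem_Ioc, ValidNode]
    constructor
    · rintro ⟨⟨hj₁, hj₂⟩, hP⟩
      exact (h j hj₁ hj₂).mp hP
    · rintro hj
      exact ⟨⟨by omega, by omega⟩, (h j (by omega) (by omega)).mpr hj⟩
  rw [this, Set.ncard_coe_finset, Nat.card_Ioc]

section BlockWords

variable {n : ℕ} {u v : List ℕ}

/-- The wire entering `D_n` in column `n + 1` is pushed to column `1`, crossing every node of the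
block; since it meets no node above the block, it is `ℓ_{n+1}`. -/
lemma nodeOnWire_descBlock (hred : IsReduced n (u ++ descWord n ++ v)) {t : ℕ} (ht : t < n) :
    NodeOnWire (u ++ descWord n ++ v) (u.length + t + 1) (n + 1) := by
  set w := u ++ descWord n ++ v
  have hlen : w.length = u.length + n + v.length := by
    rw [List.length_append, List.length_append, length_descWord]
  set r := stateBelow w u.length (n + 1)
  have hr : r ∈ Finset.Icc 1 (n + 1) := wordProd_take_mem_Icc hred.2.1 _ (by simp)
  have hcol : ∀ t ≤ n, wireCol w (u.length + t) r = n + 1 - t := by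
    intro t ht
    induction t with
    | zero => exact Equiv.symm_apply_apply _ _
    | succ t ih =>
      rw [← add_assoc, wireCol_succ (by omega), ih (by omega),
        letterAt_append_descWord u v (by omega), sTrans_apply]
      split_ifs <;> omega
  have hon : ∀ t < n, NodeOnWire w (u.length + t + 1) r := fun t ht => by
    rw [nodeOnWire_iff ⟨by omega, by omega⟩, letterAt_append_descWord u v ht, add_assoc,
      hcol (t + 1) ht]
    omega
  have hrn : r = n + 1 := by
    rw [← (wireCol_of_block hred hr (by omega) hon (by omega)).1 le_rfl, ← add_zero u.length,
      hcol 0 (Nat.zero_le n), Nat.sub_zero]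
  exact hrn ▸ hon t ht

lemma nodeOnWire_ascBlock (hred : IsReduced n (u ++ ascWord n ++ v)) {t : ℕ} (ht : t < n) :
    NodeOnWire (u ++ ascWord n ++ v) (u.length + t + 1) 1 := by
  set w := u ++ ascWord n ++ v
  have hlen : w.length = u.length + n + v.length := by
    rw [List.length_append, List.length_append, length_ascWord]
  set r := stateBelow w u.length 1
  have hr : r ∈ Finset.Icc 1 (n + 1) := wordProd_take_mem_Icc hred.2.1 _ (by simp)
  have hcol : ∀ t ≤ n, wireCol w (u.length + t) r = t + 1 := by
    intro t ht
    induction t with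
    | zero => exact Equiv.symm_apply_apply _ _
    | succ t ih =>
      rw [← add_assoc, wireCol_succ (by omega), ih (by omega),
        letterAt_append_ascWord u v (by omega), sTrans_apply]
      split_ifs <;> omega
  have hon : ∀ t < n, NodeOnWire w (u.length + t + 1) r := fun t ht => by
    rw [nodeOnWire_iff ⟨by omega, by omega⟩, letterAt_append_ascWord u v ht, add_assoc,
      hcol (t + 1) ht]
    omega
  have hr1 : r = 1 := by
    rw [← (wireCol_of_block hred hr (by omega) hon (by omega)).1 le_rfl, ← add_zero u.length,
      hcol 0 (Nat.zero_le n)]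
  exact hr1 ▸ hon t ht

lemma ncard_nodesRightOf_nodesLeftOf_descBlock (hred : IsReduced n (u ++ descWord n ++ v)) :
    (nodesRightOf (u ++ descWord n ++ v) (n + 1)).ncard = v.length ∧
      (nodesLeftOf (u ++ descWord n ++ v) (n + 1)).ncard = u.length := by
  set w := u ++ descWord n ++ v
  have hlen : w.length = u.length + n + v.length := by
    rw [List.length_append, List.length_append, length_descWord]
  have hr : n + 1 ∈ Finset.Icc 1 (n + 1) := by simp
  have hblock := fun t (ht : t < n) => nodeOnWire_descBlock hred ht
  constructor
  · rw [nodesRightOf, ncard_setOf_validNode (lo := u.length + n) le_rfl fun j hj₁ hj₂ => by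
      have := wireCol_letterAt_of_block hred hr (by omega) hblock ⟨hj₁, hj₂⟩; omega]
    omega
  · rw [nodesLeftOf, ncard_setOf_validNode (lo := 0) (hi := u.length) (by omega) fun j hj₁ hj₂ => by
      have := wireCol_letterAt_of_block hred hr (by omega) hblock ⟨hj₁, hj₂⟩; omega]
    rfl

lemma ncard_nodesLeftOf_nodesRightOf_ascBlock (hred : IsReduced n (u ++ ascWord n ++ v)) :
    (nodesLeftOf (u ++ ascWord n ++ v) 1).ncard = v.length ∧
      (nodesRightOf (u ++ ascWord n ++ v) 1).ncard = u.length := by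
  set w := u ++ ascWord n ++ v
  have hlen : w.length = u.length + n + v.length := by
    rw [List.length_append, List.length_append, length_ascWord]
  have hr : 1 ∈ Finset.Icc 1 (n + 1) := by simp
  have hblock := fun t (ht : t < n) => nodeOnWire_ascBlock hred ht
  constructor
  · rw [nodesLeftOf, ncard_setOf_validNode (lo := u.length + n) le_rfl fun j hj₁ hj₂ => by
      have := wireCol_letterAt_of_block hred hr (by omega) hblock ⟨hj₁, hj₂⟩; omega]
    omega
  · rw [nodesRightOf, ncard_setOf_validNode (lo := 0) (hi := u.length) (by omega) fun j hj₁ hj₂ => by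
      have := wireCol_letterAt_of_block hred hr (by omega) hblock ⟨hj₁, hj₂⟩; omega]
    rfl

end BlockWords

section TwoMove

variable {u v : List ℕ} {a b : ℕ}

lemma wordProd_twoMove (hab : a + 1 < b ∨ b + 1 < a) :
    wordProd (u ++ a :: b :: v) = wordProd (u ++ b :: a :: v) := by
  simp only [wordProd_append, wordProd_cons, ← mul_assoc, sTrans_mul_comm hab]

lemma IsReduced.twoMove {n : ℕ} (hab : a + 1 < b ∨ b + 1 < a) (h : IsReduced n (u ++ a :: b :: v)) :
    IsReduced n (u ++ b :: a :: v) := by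
  obtain ⟨hlen, hletters, hw⟩ := h
  refine ⟨by simpa using hlen, fun x hx => hletters x ?_, (wordProd_twoMove hab).symm.trans hw⟩
  simp only [List.mem_append, List.mem_cons] at hx ⊢
  tauto

lemma wireCol_twoMove_of_le {j : ℕ} (hj : j ≤ u.length) (r : ℕ) :
    wireCol (u ++ b :: a :: v) j r = wireCol (u ++ a :: b :: v) j r := by
  simp [wireCol, stateBelow, List.take_append_of_le_length hj]

lemma wireCol_twoMove_of_ge (hab : a + 1 < b ∨ b + 1 < a) {j : ℕ} (hj : u.length + 2 ≤ j)
    (r : ℕ) : wireCol (u ++ b :: a :: v) j r = wireCol (u ++ a :: b :: v) j r := by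
  obtain ⟨k, rfl⟩ : ∃ k, j = u.length + 2 + k := ⟨j - u.length - 2, by omega⟩
  have htake : ∀ x y : ℕ, (u ++ x :: y :: v).take (u.length + 2 + k) = u ++ x :: y :: v.take k := by
    intro x y
    rw [List.take_append, List.take_of_length_le (by omega),
      show u.length + 2 + k - u.length = k + 1 + 1 by omega]
    rfl
  rw [wireCol, wireCol, stateBelow, stateBelow, htake, htake, wordProd_twoMove hab]

lemma letterAt_append_cons_cons_one : letterAt (u ++ a :: b :: v) (u.length + 1) = a := by
  simp [letterAt]

lemma letterAt_append_cons_cons_two : letterAt (u ++ a :: b :: v) (u.length + 2) = b := by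
  simp [letterAt]

lemma letterAt_twoMove {j : ℕ} (hj : 1 ≤ j) :
    letterAt (u ++ b :: a :: v) (Equiv.swap (u.length + 1) (u.length + 2) j) =
      letterAt (u ++ a :: b :: v) j := by
  rw [Equiv.swap_apply_def]
  split_ifs with h1 h2
  · rw [h1, letterAt_append_cons_cons_one, letterAt_append_cons_cons_two]
  · rw [h2, letterAt_append_cons_cons_one, letterAt_append_cons_cons_two]
  · simp only [letterAt, List.getD_eq_getElem?_getD, List.getElem?_append, List.getElem?_cons]
    split_ifs <;> first | rfl | omega

lemma validNode_twoMove {j : ℕ} :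
    ValidNode (u ++ b :: a :: v) (Equiv.swap (u.length + 1) (u.length + 2) j) ↔
      ValidNode (u ++ a :: b :: v) j := by
  simp only [ValidNode, List.length_append, List.length_cons, Equiv.swap_apply_def]
  split_ifs <;> omega

/-- Commuting the letters `a` and `b` changes the column of a wire at the moved nodes at most by
the far transposition, which does not change the side of the node the wire is on. -/
lemma wireCol_cmp_letterAt_twoMove (hab : a + 1 < b ∨ b + 1 < a) {j : ℕ} (hj : 1 ≤ j)
    (r : ℕ) :
    let σ := Equiv.swap (u.length + 1) (u.length + 2)
    (wireCol (u ++ b :: a :: v) (σ j) r < letterAt (u ++ b :: a :: v) (σ j) ↔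
        wireCol (u ++ a :: b :: v) j r < letterAt (u ++ a :: b :: v) j) ∧
      (letterAt (u ++ b :: a :: v) (σ j) + 1 < wireCol (u ++ b :: a :: v) (σ j) r ↔
        letterAt (u ++ a :: b :: v) j + 1 < wireCol (u ++ a :: b :: v) j r) := by
  intro σ
  rw [letterAt_twoMove hj]
  have hq : u.length + 1 < (u ++ a :: b :: v).length := by simp
  have hq' : u.length + 1 < (u ++ b :: a :: v).length := by simp
  have hcol₁ : wireCol (u ++ a :: b :: v) (u.length + 1) r =
      sTrans a (wireCol (u ++ a :: b :: v) u.length r) := by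
    rw [wireCol_succ (by omega), letterAt_append_cons_cons_one]
  have hcol₂ : wireCol (u ++ a :: b :: v) (u.length + 2) r =
      sTrans b (wireCol (u ++ a :: b :: v) (u.length + 1) r) := by
    rw [wireCol_succ hq, letterAt_append_cons_cons_two]
  have hcol₁' : wireCol (u ++ b :: a :: v) (u.length + 1) r =
      sTrans b (wireCol (u ++ a :: b :: v) u.length r) := by
    rw [wireCol_succ (by omega), wireCol_twoMove_of_le le_rfl, letterAt_append_cons_cons_one]
  have hcol₂' : wireCol (u ++ b :: a :: v) (u.length + 2) r =
      sTrans a (wireCol (u ++ b :: a :: v) (u.length + 1) r) := by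
    rw [wireCol_succ hq', letterAt_append_cons_cons_two]
  rcases Nat.lt_or_ge j (u.length + 1) with hjq | hjq
  · rw [show σ j = j from Equiv.swap_apply_of_ne_of_ne (by omega) (by omega),
      wireCol_twoMove_of_le (by omega)]
    exact ⟨Iff.rfl, Iff.rfl⟩
  rcases Nat.lt_or_ge (u.length + 2) j with hjq' | hjq'
  · rw [show σ j = j from Equiv.swap_apply_of_ne_of_ne (by omega) (by omega),
      wireCol_twoMove_of_ge hab (by omega)]
    exact ⟨Iff.rfl, Iff.rfl⟩
  obtain rfl | rfl : j = u.length + 1 ∨ j = u.length + 2 := by omega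
  · rw [show σ (u.length + 1) = u.length + 2 from Equiv.swap_apply_left _ _, hcol₂', hcol₁',
      hcol₁, sTrans_apply_comm hab, letterAt_append_cons_cons_one]
    exact ⟨sTrans_lt_iff hab _, lt_sTrans_iff hab _⟩
  · rw [show σ (u.length + 2) = u.length + 1 from Equiv.swap_apply_right _ _, hcol₂, hcol₁',
      hcol₁, sTrans_apply_comm hab.symm, letterAt_append_cons_cons_two]
    exact ⟨(sTrans_lt_iff hab.symm _).symm, (lt_sTrans_iff hab.symm _).symm⟩

lemma swap_mem_nodesRightOf_twoMove_iff (hab : a + 1 < b ∨ b + 1 < a) (r j : ℕ) :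
    Equiv.swap (u.length + 1) (u.length + 2) j ∈ nodesRightOf (u ++ b :: a :: v) r ↔
      j ∈ nodesRightOf (u ++ a :: b :: v) r := by
  rw [nodesRightOf, nodesRightOf, Set.mem_ofPred_eq, Set.mem_ofPred_eq, validNode_twoMove]
  exact and_congr_right fun hj => (wireCol_cmp_letterAt_twoMove hab hj.1 r).1

lemma swap_mem_nodesLeftOf_twoMove_iff (hab : a + 1 < b ∨ b + 1 < a) (r j : ℕ) :
    Equiv.swap (u.length + 1) (u.length + 2) j ∈ nodesLeftOf (u ++ b :: a :: v) r ↔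
      j ∈ nodesLeftOf (u ++ a :: b :: v) r := by
  rw [nodesLeftOf, nodesLeftOf, Set.mem_ofPred_eq, Set.mem_ofPred_eq, validNode_twoMove]
  exact and_congr_right fun hj => (wireCol_cmp_letterAt_twoMove hab hj.1 r).2

lemma ncard_nodesRightOf_twoMove (hab : a + 1 < b ∨ b + 1 < a) (r : ℕ) :
    (nodesRightOf (u ++ b :: a :: v) r).ncard = (nodesRightOf (u ++ a :: b :: v) r).ncard := by
  rw [← Set.ncard_preimage_of_injective_subset_range
    (Equiv.injective (Equiv.swap (u.length + 1) (u.length + 2))) (by simp)]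
  exact congrArg Set.ncard (Set.ext (swap_mem_nodesRightOf_twoMove_iff hab r))

lemma ncard_nodesLeftOf_twoMove (hab : a + 1 < b ∨ b + 1 < a) (r : ℕ) :
    (nodesLeftOf (u ++ b :: a :: v) r).ncard = (nodesLeftOf (u ++ a :: b :: v) r).ncard := by
  rw [← Set.ncard_preimage_of_injective_subset_range
    (Equiv.injective (Equiv.swap (u.length + 1) (u.length + 2))) (by simp)]
  exact congrArg Set.ncard (Set.ext (swap_mem_nodesLeftOf_twoMove_iff hab r))

end TwoMove

instance : Std.Symm TwoMoveStep where
  symm _ _ := fun ⟨u, v, a, b, hab, h, h'⟩ => ⟨u, v, b, a, hab.symm, h', h⟩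

section TwoMoveEquiv

variable {w w' : List ℕ}

lemma TwoMoveEquiv.symm (h : TwoMoveEquiv w w') : TwoMoveEquiv w' w :=
  Std.Symm.symm (r := Relation.ReflTransGen TwoMoveStep) _ _ h

lemma TwoMoveEquiv.congr_left (h : TwoMoveEquiv w w') (w'' : List ℕ) :
    TwoMoveEquiv w w'' ↔ TwoMoveEquiv w' w'' :=
  ⟨h.symm.trans, Relation.ReflTransGen.trans h⟩

lemma IsReduced.of_twoMoveEquiv {n : ℕ} (hw : IsReduced n w) (h : TwoMoveEquiv w w') :
    IsReduced n w' := by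
  induction h with
  | refl => exact hw
  | tail _ hstep ih =>
    obtain ⟨u, v, a, b, hab, rfl, rfl⟩ := hstep
    exact ih.twoMove hab

lemma ncard_nodesRightOf_of_twoMoveEquiv (h : TwoMoveEquiv w w') (r : ℕ) :
    (nodesRightOf w' r).ncard = (nodesRightOf w r).ncard := by
  induction h with
  | refl => rfl
  | tail _ hstep ih =>
    obtain ⟨u, v, a, b, hab, rfl, rfl⟩ := hstep
    exact (ncard_nodesRightOf_twoMove hab r).trans ih

lemma ncard_nodesLeftOf_of_twoMoveEquiv (h : TwoMoveEquiv w w') (r : ℕ) :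
    (nodesLeftOf w' r).ncard = (nodesLeftOf w r).ncard := by
  induction h with
  | refl => rfl
  | tail _ hstep ih =>
    obtain ⟨u, v, a, b, hab, rfl, rfl⟩ := hstep
    exact (ncard_nodesLeftOf_twoMove hab r).trans ih

end TwoMoveEquiv

theorem statement1_general (n : ℕ) (i : List ℕ) (hi : IsReduced n i) :
    (∀ u v : List ℕ, TwoMoveEquiv i (u ++ descWord n ++ v) →
      v.length = {j | ValidNode i j ∧ BelowWireLast n i j}.ncard ∧
      u.length = {j | ValidNode i j ∧ AboveWireLast n i j}.ncard) ∧
    (∀ u v : List ℕ, TwoMoveEquiv i (u ++ ascWord n ++ v) →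
      v.length = {j | ValidNode i j ∧ BelowWireOne i j}.ncard ∧
      u.length = {j | ValidNode i j ∧ AboveWireOne i j}.ncard) ∧
    (∀ i' : List ℕ, TwoMoveEquiv i i' →
      indD n i = indD n i' ∧ indA n i = indA n i' ∧
      coindD n i = coindD n i' ∧ coindA n i = coindA n i') := by
  refine ⟨fun u v h => ?_, fun u v h => ?_, fun i' h => ?_⟩
  · obtain ⟨hright, hleft⟩ := ncard_nodesRightOf_nodesLeftOf_descBlock (hi.of_twoMoveEquiv h)
    exact ⟨hright.symm.trans (ncard_nodesRightOf_of_twoMoveEquiv h _),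
      hleft.symm.trans (ncard_nodesLeftOf_of_twoMoveEquiv h _)⟩
  · obtain ⟨hleft, hright⟩ := ncard_nodesLeftOf_nodesRightOf_ascBlock (hi.of_twoMoveEquiv h)
    exact ⟨hleft.symm.trans (ncard_nodesLeftOf_of_twoMoveEquiv h _),
      hright.symm.trans (ncard_nodesRightOf_of_twoMoveEquiv h _)⟩
  · simp only [indD, indA, coindD, coindA, h.congr_left, and_self]

/-- well-definedness of the indices.
In any decomposition `i ∼ u D_n v` the length of `v` equals the number of nodes of
`G(i)` below the wire `ℓ_{n+1}`, and the length of `u` the number of nodes above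
`ℓ_{n+1}`; analogously for decompositions `i ∼ u' A_n v'` with the wire `ℓ_1`.
In particular `ind_D`, `ind_A`, `coind_D`, `coind_A` are well defined on 2-move
equivalence classes. -/
theorem statement1 (n : ℕ) (hn : 1 ≤ n) (i : List ℕ) (hi : IsReduced n i) :
    (∀ u v : List ℕ, TwoMoveEquiv i (u ++ descWord n ++ v) →
      v.length = {j | ValidNode i j ∧ BelowWireLast n i j}.ncard ∧
      u.length = {j | ValidNode i j ∧ AboveWireLast n i j}.ncard) ∧
    (∀ u v : List ℕ, TwoMoveEquiv i (u ++ ascWord n ++ v) →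
      v.length = {j | ValidNode i j ∧ BelowWireOne i j}.ncard ∧
      u.length = {j | ValidNode i j ∧ AboveWireOne i j}.ncard) ∧
    (∀ i' : List ℕ, TwoMoveEquiv i i' →
      indD n i = indD n i' ∧ indA n i = indA n i' ∧
      coindD n i = coindD n i' ∧ coindA n i = coindA n i') :=
  statement1_general n i hi

end StringPolytope
end
end
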